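/- In the graph Γ of self-intersections associated to a generic homotopy of closed curves, every vertex has degree 0, 1, or 2; more precisely, a vertex v corresponding to a self-intersection s of γ_{t_i} has degree 2 − x − y, where x = 1 if s is destroyed by a Type 1 deletion in the next move (and x = 0 otherwise) and y = 1 if s is created by a Type 1 creation in the previous move (and y = 0 otherwise). -/

import Mathlib

noncomputable section

/-- The target of the `follow` map of a Reidemeister move (defaulting to `0`). -/
def followTarget (follow : ℕ → ℕ → Option ℕ) (i v : ℕ) : ℕ :=
  (follow i v).getD 0

/-- The edge multiset of the graph `Γ` of self-intersections of a generic homotopy of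
closed curves: for each step `i` (a Reidemeister move between times `t_i` and `t_{i+1}`),
every surviving self-intersection `v` of `γ_{t_i}` is joined to the self-intersection of
`γ_{t_{i+1}}` it is followed to, and a Type 2 move additionally joins the pair of
annihilated (resp. created) self-intersections by an edge.  Vertices are pairs
`(i, v)` with `v` a self-intersection of `γ_{t_i}`. -/
def graphEdges (n : ℕ) (V : ℕ → Finset ℕ) (mt : ℕ → Fin 3)
    (follow : ℕ → ℕ → Option ℕ) (created destroyed : ℕ → Finset ℕ)
    (pairC pairD : ℕ → ℕ × ℕ) : Multiset ((ℕ × ℕ) × (ℕ × ℕ)) :=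
  ∑ i ∈ Finset.range n,
    (((V i \ destroyed i).val.map fun v => ((i, v), (i + 1, followTarget follow i v)))
      + (if mt i = 1 ∧ (destroyed i).Nonempty
          then {((i, (pairD i).1), (i, (pairD i).2))} else 0)
      + (if mt i = 1 ∧ (created i).Nonempty
          then {((i + 1, (pairC i).1), (i + 1, (pairC i).2))} else 0))

/-- The degree of a vertex: the number of incident edge-endpoints. -/
def vdeg (edges : Multiset ((ℕ × ℕ) × (ℕ × ℕ))) (v : ℕ × ℕ) : ℕ :=
  (edges.map fun e => (if e.1 = v then 1 else 0) + (if e.2 = v then 1 else 0)).sum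

/-! Every edge of `Γ` either joins consecutive levels or lies in one level, so the degree of
`(i, v)` is its degree in the edges of the move leaving level `i` plus its degree in the edges of
the move entering it. Leaving level `i`, the intersection `v` either survives and has exactly one
follow edge, or is destroyed: by a Type 2 move, which gives it one pair edge, or by a Type 1 move,
which gives it none. Entering level `i`, `follow` is a bijection from the survivors onto the
intersections not created by the move, so `v` again has exactly one follow edge unless it is
created, and then it has one pair edge or none according to the type of the move. -/

open Finset

section Vdeg

variable (v : ℕ × ℕ)

@[simp]
lemma vdeg_zero : vdeg 0 v = 0 := rfl

@[simp]
lemma vdeg_add (a b : Multiset ((ℕ × ℕ) × (ℕ × ℕ))) :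
    vdeg (a + b) v = vdeg a v + vdeg b v := by
  simp [vdeg]

@[simp]
lemma vdeg_singleton (e : (ℕ × ℕ) × (ℕ × ℕ)) :
    vdeg {e} v = (if e.1 = v then 1 else 0) + (if e.2 = v then 1 else 0) := by
  simp [vdeg]

lemma vdeg_sum {ι : Type*} (s : Finset ι) (f : ι → Multiset ((ℕ × ℕ) × (ℕ × ℕ))) :
    vdeg (∑ j ∈ s, f j) v = ∑ j ∈ s, vdeg (f j) v :=
  map_sum (⟨⟨(vdeg · v), vdeg_zero v⟩, (vdeg_add v · ·)⟩ : Multiset _ →+ ℕ) f s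

end Vdeg

section Edges

variable (j k v : ℕ)

def followEdges (S : Finset ℕ) (g : ℕ → ℕ) : Multiset ((ℕ × ℕ) × (ℕ × ℕ)) :=
  S.val.map fun w => ((j, w), (j + 1, g w))

def pairEdge (P : Prop) [Decidable P] (A : Finset ℕ) (p : ℕ × ℕ) :
    Multiset ((ℕ × ℕ) × (ℕ × ℕ)) :=
  if P ∧ A.Nonempty then {((k, p.1), (k, p.2))} else 0

variable {j k} (S : Finset ℕ) (g : ℕ → ℕ)

lemma vdeg_followEdges_source : vdeg (followEdges j S g) (j, v) = if v ∈ S then 1 else 0 := by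
  simp [followEdges, vdeg, Multiset.map_map]

lemma vdeg_followEdges_target : vdeg (followEdges j S g) (j + 1, v) = #{w ∈ S | g w = v} := by
  simp [followEdges, vdeg, Multiset.map_map]

lemma vdeg_followEdges_of_ne (hj : j ≠ k) (hj' : j + 1 ≠ k) :
    vdeg (followEdges j S g) (k, v) = 0 := by
  simp [followEdges, vdeg, hj, hj']

variable {P : Prop} [Decidable P] {A : Finset ℕ} {p : ℕ × ℕ}

lemma vdeg_pairEdge_of_ne {k' : ℕ} (hk : k ≠ k') : vdeg (pairEdge k P A p) (k', v) = 0 := by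
  unfold pairEdge
  split_ifs <;> simp [hk]

lemma vdeg_pairEdge (hA : P → #A = 2 ∨ A = ∅)
    (hp : #A = 2 → A = {p.1, p.2} ∧ p.1 ≠ p.2) :
    vdeg (pairEdge k P A p) (k, v) = if P ∧ v ∈ A then 1 else 0 := by
  unfold pairEdge
  by_cases hP : P
  · rcases hA hP with hcard | rfl
    · obtain ⟨rfl, hne⟩ := hp hcard
      by_cases h1 : p.1 = v <;> by_cases h2 : p.2 = v <;> simp_all [eq_comm]
    · simp
  · simp [hP]

end Edges

lemma card_filter_getD_eq {α β : Type*} [DecidableEq β] {f : α → Option β} {S : Finset α}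
    {T : Finset β} (hmaps : ∀ x ∈ S, ∃ y ∈ T, f x = some y)
    (hinj : ∀ x ∈ S, ∀ x' ∈ S, f x = f x' → x = x')
    (hsurj : ∀ y ∈ T, ∃ x ∈ S, f x = some y) (d y : β) :
    #{x ∈ S | (f x).getD d = y} = if y ∈ T then 1 else 0 := by
  split_ifs with hy
  · obtain ⟨x₀, hx₀, hfx₀⟩ := hsurj y hy
    refine card_eq_one.2 ⟨x₀, eq_singleton_iff_unique_mem.2 ⟨by simp [hx₀, hfx₀], ?_⟩⟩
    intro x hx
    obtain ⟨hxS, hfx⟩ := mem_filter.1 hx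
    obtain ⟨y', -, hxy'⟩ := hmaps x hxS
    rw [hxy', Option.getD_some] at hfx
    exact hinj x hxS x₀ hx₀ (by rw [hxy', hfx₀, hfx])
  · refine card_eq_zero.2 (filter_eq_empty_iff.2 fun x hxS hfx => hy ?_)
    obtain ⟨y', hy', hxy'⟩ := hmaps x hxS
    rwa [← hfx, hxy', Option.getD_some]

lemma sum_range_eq_ite_add_ite {M : Type*} [AddCommMonoid M] (f : ℕ → M) (n i : ℕ)
    (hf : ∀ j, j ≠ i → j + 1 ≠ i → f j = 0) :
    ∑ j ∈ range n, f j =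
      (if i < n then f i else 0) + (if 0 < i ∧ i ≤ n then f (i - 1) else 0) := by
  have hsplit : ∀ j, f j = (if j = i then f j else 0) + (if j + 1 = i then f j else 0) := by
    intro j
    by_cases h : j = i
    · simp [h]
    · by_cases h' : j + 1 = i <;> simp [h, h', hf]
  rw [sum_congr rfl fun j _ => hsplit j, sum_add_distrib, sum_ite_eq']
  rcases i with _ | k <;> simp

lemma ite_mem_sdiff_add_ite_and_mem {S A : Finset ℕ} {t : Fin 3} {v : ℕ} (hv : v ∈ S)
    (hA : t = 2 → A = ∅) :
    ((if v ∈ S \ A then 1 else 0) + if t = 1 ∧ v ∈ A then 1 else 0) =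
      if t = 0 ∧ v ∈ A then 0 else 1 := by
  by_cases hvA : v ∈ A
  · have ht : t ≠ 2 := fun h => by simp [hA h] at hvA
    fin_cases t <;> simp_all
  · simp [hv, hvA]

lemma ite_lt_add_ite_pos_eq_two_sub {n i : ℕ} (hi : i ≤ n) (P Q : Prop) [Decidable P]
    [Decidable Q] :
    (if i < n then (if P then 0 else 1) else 0) +
        (if 0 < i ∧ i ≤ n then (if Q then 0 else 1) else 0) =
      2 - (if i = n ∨ P then 1 else 0) - (if i = 0 ∨ Q then 1 else 0) := by
  by_cases hP : P <;> by_cases hQ : Q <;>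
    simp only [hP, hQ, or_true, or_false, if_true, if_false] <;> split_ifs <;> omega

-- `mt j = t` encodes a Reidemeister move of Type `t + 1`.
section MoveEdges

variable (V : ℕ → Finset ℕ) (mt : ℕ → Fin 3) (follow : ℕ → ℕ → Option ℕ)
  (created destroyed : ℕ → Finset ℕ) (pairC pairD : ℕ → ℕ × ℕ)

def moveEdges (j : ℕ) : Multiset ((ℕ × ℕ) × (ℕ × ℕ)) :=
  followEdges j (V j \ destroyed j) (followTarget follow j)
    + pairEdge j (mt j = 1) (destroyed j) (pairD j)
    + pairEdge (j + 1) (mt j = 1) (created j) (pairC j)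

lemma graphEdges_eq_sum_moveEdges (n : ℕ) :
    graphEdges n V mt follow created destroyed pairC pairD =
      ∑ j ∈ range n, moveEdges V mt follow created destroyed pairC pairD j := rfl

variable {V mt follow created destroyed pairC pairD}

lemma vdeg_moveEdges_of_ne {j k : ℕ} (hj : j ≠ k) (hj' : j + 1 ≠ k) (v : ℕ) :
    vdeg (moveEdges V mt follow created destroyed pairC pairD j) (k, v) = 0 := by
  rw [moveEdges, vdeg_add, vdeg_add, vdeg_followEdges_of_ne v _ _ hj hj',
    vdeg_pairEdge_of_ne v hj, vdeg_pairEdge_of_ne v hj']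

lemma vdeg_moveEdges_source {j v : ℕ} (hv : v ∈ V j)
    (hD : mt j = 1 → #(destroyed j) = 2 ∨ destroyed j = ∅)
    (hpD : #(destroyed j) = 2 →
      destroyed j = {(pairD j).1, (pairD j).2} ∧ (pairD j).1 ≠ (pairD j).2)
    (hD₂ : mt j = 2 → destroyed j = ∅) :
    vdeg (moveEdges V mt follow created destroyed pairC pairD j) (j, v) =
      if mt j = 0 ∧ v ∈ destroyed j then 0 else 1 := by
  rw [moveEdges, vdeg_add, vdeg_add, vdeg_followEdges_source, vdeg_pairEdge v hD hpD,
    vdeg_pairEdge_of_ne v (Nat.succ_ne_self j), add_zero]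
  exact ite_mem_sdiff_add_ite_and_mem hv hD₂

lemma vdeg_moveEdges_target {j v : ℕ} (hv : v ∈ V (j + 1))
    (hfol : ∀ v ∈ V j \ destroyed j, ∃ w ∈ V (j + 1) \ created j, follow j v = some w)
    (hinj : ∀ v ∈ V j \ destroyed j, ∀ v' ∈ V j \ destroyed j,
      follow j v = follow j v' → v = v')
    (hsurj : ∀ w ∈ V (j + 1) \ created j, ∃ v ∈ V j \ destroyed j, follow j v = some w)
    (hC : mt j = 1 → #(created j) = 2 ∨ created j = ∅)
    (hpC : #(created j) = 2 →
      created j = {(pairC j).1, (pairC j).2} ∧ (pairC j).1 ≠ (pairC j).2)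
    (hC₂ : mt j = 2 → created j = ∅) :
    vdeg (moveEdges V mt follow created destroyed pairC pairD j) (j + 1, v) =
      if mt j = 0 ∧ v ∈ created j then 0 else 1 := by
  have hfiber : #{w ∈ V j \ destroyed j | followTarget follow j w = v} =
      if v ∈ V (j + 1) \ created j then 1 else 0 :=
    card_filter_getD_eq hfol hinj hsurj 0 v
  rw [moveEdges, vdeg_add, vdeg_add, vdeg_followEdges_target, hfiber,
    vdeg_pairEdge_of_ne v (Nat.succ_ne_self j).symm, vdeg_pairEdge v hC hpC, add_zero]
  exact ite_mem_sdiff_add_ite_and_mem hv hC₂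

end MoveEdges

theorem graph_vertex_degree_general
    (n : ℕ) (V : ℕ → Finset ℕ) (mt : ℕ → Fin 3)
    (follow : ℕ → ℕ → Option ℕ) (created destroyed : ℕ → Finset ℕ)
    (pairC pairD : ℕ → ℕ × ℕ)
    -- every surviving self-intersection is followed forward:
    (hfol : ∀ i < n, ∀ v ∈ V i \ destroyed i,
      ∃ w ∈ V (i + 1) \ created i, follow i v = some w)
    -- following forward is injective:
    (hinj : ∀ i < n, ∀ v ∈ V i \ destroyed i, ∀ v' ∈ V i \ destroyed i,
      follow i v = follow i v' → v = v')
    -- every self-intersection not created by the move comes from a previous one: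
    (hsurj : ∀ i < n, ∀ w ∈ V (i + 1) \ created i,
      ∃ v ∈ V i \ destroyed i, follow i v = some w)
    -- a Type 1 move creates or destroys exactly one self-intersection; a Type 2 move
    -- creates or destroys exactly two; a Type 3 move creates and destroys none:
    (htype : ∀ i < n,
      (mt i = 0 → (destroyed i).card + (created i).card = 1) ∧
      (mt i = 1 → ((destroyed i).card = 2 ∧ created i = ∅) ∨
        ((created i).card = 2 ∧ destroyed i = ∅)) ∧
      (mt i = 2 → destroyed i = ∅ ∧ created i = ∅))
    -- the pairs of intersections annihilated/created by Type 2 moves: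
    (hpair : ∀ i < n,
      ((destroyed i).card = 2 →
        destroyed i = {(pairD i).1, (pairD i).2} ∧ (pairD i).1 ≠ (pairD i).2) ∧
      ((created i).card = 2 →
        created i = {(pairC i).1, (pairC i).2} ∧ (pairC i).1 ≠ (pairC i).2))
    (i : ℕ) (hi : i ≤ n) (v : ℕ) (hv : v ∈ V i) :
    vdeg (graphEdges n V mt follow created destroyed pairC pairD) (i, v) =
      2 - (if i = n ∨ (mt i = 0 ∧ v ∈ destroyed i) then 1 else 0)
        - (if i = 0 ∨ (mt (i - 1) = 0 ∧ v ∈ created (i - 1)) then 1 else 0) ∧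
    vdeg (graphEdges n V mt follow created destroyed pairC pairD) (i, v) ≤ 2 := by
  have hdeg : vdeg (graphEdges n V mt follow created destroyed pairC pairD) (i, v) =
      (if i < n then (if mt i = 0 ∧ v ∈ destroyed i then 0 else 1) else 0) +
        (if 0 < i ∧ i ≤ n then (if mt (i - 1) = 0 ∧ v ∈ created (i - 1) then 0 else 1)
          else 0) := by
    rw [graphEdges_eq_sum_moveEdges, vdeg_sum,
      sum_range_eq_ite_add_ite _ _ _ fun j hj hj' => vdeg_moveEdges_of_ne hj hj' v]
    congr 1
    · by_cases hin : i < n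
      · rw [if_pos hin, if_pos hin]
        exact vdeg_moveEdges_source hv
          (fun h => ((htype i hin).2.1 h).imp And.left And.right) (hpair i hin).1
          (fun h => ((htype i hin).2.2 h).1)
      · rw [if_neg hin, if_neg hin]
    · by_cases hpos : 0 < i ∧ i ≤ n
      · rw [if_pos hpos, if_pos hpos]
        obtain ⟨k, rfl⟩ : ∃ k, i = k + 1 := ⟨i - 1, by omega⟩
        have hk : k < n := by omega
        exact vdeg_moveEdges_target hv (hfol k hk) (hinj k hk) (hsurj k hk)
          (fun h => ((htype k hk).2.1 h).symm.imp And.left And.right) (hpair k hk).2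
          (fun h => ((htype k hk).2.2 h).2)
      · rw [if_neg hpos, if_neg hpos]
  rw [hdeg, ite_lt_add_ite_pos_eq_two_sub hi]
  exact ⟨rfl, (Nat.sub_le _ _).trans (Nat.sub_le _ _)⟩

/-- **Lemma 3.2.**  In the graph `Γ` of self-intersections of a generic homotopy of closed
curves (decomposed into Reidemeister moves, the move between `t_i` and `t_{i+1}` being of
type `mt i + 1 ∈ {1,2,3}`, with `follow` tracking self-intersections forward, and
`created`/`destroyed` recording the intersections created/destroyed by each move), every
vertex has degree `0`, `1` or `2`.  More precisely, a vertex `v ∈ V i` has degree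
`2 - x - y`, where `x = 1` iff `v` is destroyed by a Type 1 deletion in the next move
(with the convention `x = 1` when `i` is the last index), and `y = 1` iff `v` is created
by a Type 1 creation in the previous move (with the convention `y = 1` when `i = 0`). -/
theorem graph_vertex_degree
    (n : ℕ) (V : ℕ → Finset ℕ) (mt : ℕ → Fin 3)
    (follow : ℕ → ℕ → Option ℕ) (created destroyed : ℕ → Finset ℕ)
    (pairC pairD : ℕ → ℕ × ℕ)
    -- `destroyed i` consists of self-intersections at time `i`, `created i` of
    -- self-intersections at time `i+1`:
    (hsub : ∀ i < n, destroyed i ⊆ V i ∧ created i ⊆ V (i + 1))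
    -- every surviving self-intersection is followed forward:
    (hfol : ∀ i < n, ∀ v ∈ V i \ destroyed i,
      ∃ w ∈ V (i + 1) \ created i, follow i v = some w)
    -- following forward is injective:
    (hinj : ∀ i < n, ∀ v ∈ V i \ destroyed i, ∀ v' ∈ V i \ destroyed i,
      follow i v = follow i v' → v = v')
    -- every self-intersection not created by the move comes from a previous one:
    (hsurj : ∀ i < n, ∀ w ∈ V (i + 1) \ created i,
      ∃ v ∈ V i \ destroyed i, follow i v = some w)
    -- a Type 1 move creates or destroys exactly one self-intersection; a Type 2 move
    -- creates or destroys exactly two; a Type 3 move creates and destroys none: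
    (htype : ∀ i < n,
      (mt i = 0 → (destroyed i).card + (created i).card = 1) ∧
      (mt i = 1 → ((destroyed i).card = 2 ∧ created i = ∅) ∨
        ((created i).card = 2 ∧ destroyed i = ∅)) ∧
      (mt i = 2 → destroyed i = ∅ ∧ created i = ∅))
    -- the pairs of intersections annihilated/created by Type 2 moves:
    (hpair : ∀ i < n,
      ((destroyed i).card = 2 →
        destroyed i = {(pairD i).1, (pairD i).2} ∧ (pairD i).1 ≠ (pairD i).2) ∧
      ((created i).card = 2 →
        created i = {(pairC i).1, (pairC i).2} ∧ (pairC i).1 ≠ (pairC i).2))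
    (i : ℕ) (hi : i ≤ n) (v : ℕ) (hv : v ∈ V i) :
    vdeg (graphEdges n V mt follow created destroyed pairC pairD) (i, v) =
      2 - (if i = n ∨ (mt i = 0 ∧ v ∈ destroyed i) then 1 else 0)
        - (if i = 0 ∨ (mt (i - 1) = 0 ∧ v ∈ created (i - 1)) then 1 else 0) ∧
    vdeg (graphEdges n V mt follow created destroyed pairC pairD) (i, v) ≤ 2 :=
  graph_vertex_degree_general n V mt follow created destroyed pairC pairD hfol hinj hsurj htype
    hpair i hi v hv
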